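/- arXiv:1604.03837 — 6 statements merged into one kernel-verified Lean document; each statement's English description precedes it below -/
import Mathlib

section
/- Let G be a finite cyclic group of order N (written multiplicatively), let g ∈ G be a generator, and let F ⊆ G be a finite subset generating G. Let A = ℤ/Nℤ and let φ : A^F → G be the group homomorphism sending (e_f)_{f∈F} to ∏_{f∈F} f^{e_f} (exponents taken via integer representatives, which is well defined since g has order N). Suppose R ⊆ ker φ is a set of vectors whose A-span equals ker φ, and suppose (x_f)_{f∈F} ∈ A^F satisfies ∑_{f∈F} x_f e_f = 0 for every (e_f)_{f∈F} ∈ R. Then there exists λ ∈ A such that for every f ∈ F and every integer m with g^m = f one has x_f = λ·(m mod N). -/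
/-- Index calculus lemma: if the relations span the kernel of the product map
`φ : (ZMod N)^F → G`, then any vector orthogonal to all relations is a scalar
multiple of the vector of discrete logarithms of the factor base elements. -/
theorem index_calculus_relations {G : Type*} [CommGroup G] [Fintype G]
    (N : ℕ) (hN : Fintype.card G = N)
    (g : G) (hg : ∀ a : G, a ∈ Subgroup.zpowers g)
    (F : Finset G) (hF : Subgroup.closure (F : Set G) = ⊤)
    (R : Set (F → ZMod N))
    (hspan : (Submodule.span (ZMod N) R : Set (F → ZMod N)) =
      {e : F → ZMod N | ∏ f : F, (f : G) ^ (e f).val = 1})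
    (x : F → ZMod N)
    (hx : ∀ e ∈ R, ∑ f : F, x f * e f = 0) :
    ∃ lam : ZMod N, ∀ f : F, ∀ m : ℤ, g ^ m = (f : G) → x f = lam * (m : ZMod N) := by
  classical
  haveI : NeZero N := ⟨by rintro rfl; exact (Fintype.card_pos (α := G)).ne' hN⟩
  have hord : orderOf g = N := by
    rw [orderOf_eq_card_of_forall_mem_zpowers hg, Nat.card_eq_fintype_card, hN]
  have hdl : ∀ f : F, ∃ k : ℤ, g ^ k = (f : G) := fun f =>
    Subgroup.mem_zpowers_iff.mp (hg (f : G))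
  choose m_ hm_ using hdl
  -- basic fact: g ^ k = 1 iff k = 0 in ZMod N
  have hone : ∀ k : ℤ, g ^ k = 1 ↔ (k : ZMod N) = 0 := fun k => by
    rw [← orderOf_dvd_iff_zpow_eq_one, hord, ZMod.intCast_zmod_eq_zero_iff_dvd]
  have heq : ∀ k l : ℤ, (k : ZMod N) = (l : ZMod N) → g ^ k = g ^ l := by
    intro k l h
    have h1 : g ^ (k - l) = 1 := (hone _).mpr (by push_cast; rw [h]; ring)
    calc g ^ k = g ^ (k - l) * g ^ l := by rw [← zpow_add]; ring_nf
    _ = g ^ l := by rw [h1, one_mul]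
  -- the dlog functional and its integer lift
  set D : (F → ZMod N) → ZMod N := fun e => ∑ f : F, (m_ f : ZMod N) * e f with hD
  set Sz : (F → ZMod N) → ℤ := fun e => ∑ f : F, m_ f * ((e f).val : ℤ) with hSz
  have hDcast : ∀ e, ((Sz e : ℤ) : ZMod N) = D e := fun e => by
    simp only [hSz, hD]
    push_cast
    simp [ZMod.natCast_val, ZMod.cast_id]
  have hprod : ∀ e : F → ZMod N, ∏ f : F, (f : G) ^ (e f).val = g ^ (Sz e) := fun e => by
    have key : ∀ (s : Finset F) (a : F → ℤ), g ^ (∑ i ∈ s, a i) = ∏ i ∈ s, g ^ a i := by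
      intro s a
      induction s using Finset.cons_induction with
      | empty => simp
      | cons i s hi ih => rw [Finset.sum_cons, Finset.prod_cons, zpow_add, ih]
    simp only [hSz]
    rw [key]
    refine Finset.prod_congr rfl fun f _ => ?_
    rw [← hm_ f, ← zpow_natCast, ← zpow_mul]
  -- surjectivity of D: from closure F = ⊤
  have hcl : ∀ y ∈ Subgroup.closure (F : Set G), ∃ e : F → ZMod N, g ^ (Sz e) = y := by
    intro y hy
    induction hy using Subgroup.closure_induction with
    | mem f hf =>
        refine ⟨Pi.single ⟨f, hf⟩ 1, ?_⟩
        have : g ^ (Sz (Pi.single ⟨f, hf⟩ 1)) = g ^ (m_ ⟨f, hf⟩) := by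
          apply heq
          rw [hDcast]
          simp [hD, Pi.single_apply, mul_ite, Finset.sum_ite_eq']
        rw [this, hm_]
    | one =>
        refine ⟨0, ?_⟩
        have : g ^ (Sz 0) = g ^ (0 : ℤ) := by
          apply heq; rw [hDcast]; simp [hD]
        simp [this]
    | mul a b _ _ iha ihb =>
        obtain ⟨e₁, he₁⟩ := iha
        obtain ⟨e₂, he₂⟩ := ihb
        refine ⟨e₁ + e₂, ?_⟩
        have : g ^ (Sz (e₁ + e₂)) = g ^ (Sz e₁ + Sz e₂) := by
          apply heq
          rw [hDcast]
          push_cast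
          rw [hDcast e₁, hDcast e₂]
          simp [hD, mul_add, Finset.sum_add_distrib]
        rw [this, zpow_add, he₁, he₂]
    | inv a _ iha =>
        obtain ⟨e, he⟩ := iha
        refine ⟨-e, ?_⟩
        have : g ^ (Sz (-e)) = g ^ (-Sz e) := by
          apply heq
          rw [hDcast]
          push_cast
          rw [hDcast e]
          simp [hD, mul_neg, Finset.sum_neg_distrib]
        rw [this, zpow_neg, he]
  obtain ⟨e₀, he₀⟩ := hcl g (hF ▸ Subgroup.mem_top g)
  have hDe₀ : D e₀ = 1 := by
    have h1 : g ^ (Sz e₀ - 1) = 1 := by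
      rw [zpow_sub, he₀, zpow_one, mul_inv_cancel]
    have := (hone _).mp h1
    push_cast at this
    rw [hDcast e₀] at this
    linear_combination this
  -- the functional L
  let L : (F → ZMod N) →ₗ[ZMod N] ZMod N :=
    { toFun := fun e => ∑ f : F, x f * e f
      map_add' := fun a b => by simp [mul_add, Finset.sum_add_distrib]
      map_smul' := fun c a => by
        simp only [Pi.smul_apply, smul_eq_mul, RingHom.id_apply, Finset.mul_sum]
        exact Finset.sum_congr rfl fun f _ => by ring }
  have hLspan : Submodule.span (ZMod N) R ≤ LinearMap.ker L :=
    Submodule.span_le.mpr fun r hr => by simpa [L] using hx r hr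
  have hker : ∀ e : F → ZMod N, D e = 0 → L e = 0 := by
    intro e he
    have hmem : e ∈ (Submodule.span (ZMod N) R : Set (F → ZMod N)) := by
      rw [hspan]
      show ∏ f : F, (f : G) ^ (e f).val = 1
      rw [hprod]
      exact (hone _).mpr (by rw [hDcast e, he])
    exact hLspan hmem
  -- conclusion
  refine ⟨L e₀, ?_⟩
  intro f m hm
  have hc : (m : ZMod N) = (m_ f : ZMod N) := by
    have h1 : g ^ (m - m_ f) = 1 := by rw [zpow_sub, hm, hm_ f, mul_inv_cancel]
    have := (hone _).mp h1
    push_cast at this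
    linear_combination this
  have hDe : D (Pi.single f 1 - (m_ f : ZMod N) • e₀) = 0 := by
    have h1 : D (Pi.single f 1) = (m_ f : ZMod N) := by
      simp [hD, Pi.single_apply, mul_ite, Finset.sum_ite_eq']
    have h2 : D (Pi.single f 1 - (m_ f : ZMod N) • e₀)
        = D (Pi.single f 1) - (m_ f : ZMod N) * D e₀ := by
      simp [hD, mul_sub, Finset.sum_sub_distrib, Finset.mul_sum]
      exact Finset.sum_congr rfl fun i _ => by ring
    rw [h2, h1, hDe₀, mul_one, sub_self]
  have hL := hker _ hDe
  rw [map_sub, map_smul] at hL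
  have hLs : L (Pi.single f 1) = x f := by
    simp [L, Pi.single_apply, mul_ite, Finset.sum_ite_eq']
  rw [hLs, smul_eq_mul] at hL
  rw [hc]
  have := sub_eq_zero.mp hL
  rw [this]; ring
end

section
/- Let N be a positive integer, let F be a finite set, and let K be a ℤ/Nℤ-submodule of the module (ℤ/Nℤ)^F of functions F → ℤ/Nℤ. Then the annihilator K^⊥ = { x ∈ (ℤ/Nℤ)^F : ∑_{f∈F} x_f e_f = 0 for all e ∈ K } is isomorphic, as a ℤ/Nℤ-module, to the quotient module (ℤ/Nℤ)^F / K. -/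
/-- The annihilator `K^⊥` of a submodule `K` of `(ℤ/Nℤ)^F` under the pairing
`(x, e) ↦ ∑ f, x f * e f`. -/
def annihilator (N : ℕ) (F : Type*) [Fintype F]
    (K : Submodule (ZMod N) (F → ZMod N)) : Submodule (ZMod N) (F → ZMod N) where
  carrier := {x : F → ZMod N | ∀ e ∈ K, ∑ f : F, x f * e f = 0}
  add_mem' := by
    intro a b ha hb e he
    have h1 := ha e he
    have h2 := hb e he
    simp only [Pi.add_apply, add_mul]
    rw [Finset.sum_add_distrib, h1, h2, add_zero]
  zero_mem' := by
    intro e he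
    simp
  smul_mem' := by
    intro c a ha e he
    have h1 := ha e he
    simp only [Pi.smul_apply, smul_eq_mul, mul_assoc, ← Finset.mul_sum, h1, mul_zero]

/-- Duality: a finite `ZMod N`-module is isomorphic to its `ZMod N`-dual (as additive
groups, hence as modules). -/
private lemma dual_equiv (N : ℕ) [NeZero N] (Q : Type*) [AddCommGroup Q] [Finite Q]
    [Module (ZMod N) Q] : Nonempty ((Q →+ ZMod N) ≃+ Q) := by
  haveI hcycU : IsCyclic (Multiplicative (ZMod N))ˣ :=
    isCyclic_of_surjective (toUnits (G := Multiplicative (ZMod N))).toMonoidHom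
      toUnits.surjective
  haveI hRoU : HasEnoughRootsOfUnity (Multiplicative (ZMod N)) N := by
    constructor
    · refine ⟨Multiplicative.ofAdd (1 : ZMod N), ?_, ?_⟩
      · rw [← ofAdd_nsmul]
        simp
      · intro l hl
        rw [← ofAdd_nsmul] at hl
        have : ((l : ZMod N)) = 0 := by
          simpa using hl
        exact (ZMod.natCast_eq_zero_iff l N).mp this
    · infer_instance
  have hexp : Monoid.exponent (Multiplicative Q) ∣ N := by
    refine Monoid.exponent_dvd_of_forall_pow_eq_one fun g => ?_
    have h : N • g.toAdd = 0 := ZModModule.char_nsmul_eq_zero N g.toAdd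
    have := congrArg Multiplicative.ofAdd h
    rwa [ofAdd_nsmul, ofAdd_toAdd, ofAdd_zero] at this
  haveI := HasEnoughRootsOfUnity.of_dvd (Multiplicative (ZMod N)) hexp
  obtain ⟨E⟩ := CommGroup.monoidHom_mulEquiv_of_hasEnoughRootsOfUnity
    (Multiplicative Q) (Multiplicative (ZMod N))
  let E2 : (Multiplicative Q →* Multiplicative (ZMod N)) ≃*
      (Multiplicative Q →* (Multiplicative (ZMod N))ˣ) :=
    MulEquiv.monoidHomCongrRight toUnits
  let E3 := E2.trans E
  refine ⟨AddEquiv.mk'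
    ((AddMonoidHom.toMultiplicative.trans E3.toEquiv).trans Multiplicative.toAdd) ?_⟩
  intro f g
  have h : AddMonoidHom.toMultiplicative (f + g) =
      AddMonoidHom.toMultiplicative f * AddMonoidHom.toMultiplicative g :=
    MonoidHom.ext fun _ => rfl
  simp [h, map_mul]

/-- The pairing identifies the annihilator with the additive dual of the quotient. -/
private lemma ann_equiv_dual (N : ℕ) [NeZero N] (F : Type*) [Fintype F]
    (K : Submodule (ZMod N) (F → ZMod N)) :
    Nonempty ((annihilator N F K) ≃+ (((F → ZMod N) ⧸ K) →+ ZMod N)) := by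
  classical
  -- the key computation
  have key : ∀ (ψ : ((F → ZMod N) ⧸ K) →+ ZMod N) (e : F → ZMod N),
      ∑ f : F, ψ (Submodule.Quotient.mk (Pi.single f 1)) * e f =
        ψ (Submodule.Quotient.mk e) := by
    intro ψ e
    have h1 : ∀ f : F, ψ (Submodule.Quotient.mk (Pi.single f 1)) * e f =
        ψ (Submodule.Quotient.mk (Pi.single f (e f))) := by
      intro f
      have : (Pi.single f (e f) : F → ZMod N) = e f • (Pi.single f 1 : F → ZMod N) := by
        ext g
        by_cases hg : g = f <;> simp [hg, Pi.single_apply]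
      rw [this, Submodule.Quotient.mk_smul, ZMod.map_smul, smul_eq_mul, mul_comm]
    simp_rw [h1]
    rw [← map_sum]
    congr 1
    have h2 : (Submodule.Quotient.mk (∑ x : F, Pi.single x (e x)) : _ ⧸ K) =
        ∑ x : F, Submodule.Quotient.mk (Pi.single x (e x)) :=
      map_sum (Submodule.mkQ K) _ _
    rw [← h2, Finset.univ_sum_single]
  -- forward map
  have mem_ann : ∀ (ψ : ((F → ZMod N) ⧸ K) →+ ZMod N),
      (fun f => ψ (Submodule.Quotient.mk (Pi.single f 1))) ∈ annihilator N F K := by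
    intro ψ e he
    rw [key ψ e, (Submodule.Quotient.mk_eq_zero K).mpr he, map_zero]
  let A : (annihilator N F K) → (((F → ZMod N) ⧸ K) →+ ZMod N) := fun x =>
    ((Submodule.liftQ K
      { toFun := fun e => ∑ f : F, x.1 f * e f
        map_add' := by
          intro a b
          simp only [Pi.add_apply, mul_add]
          rw [Finset.sum_add_distrib]
        map_smul' := by
          intro c a
          simp only [Pi.smul_apply, smul_eq_mul, RingHom.id_apply]
          rw [Finset.mul_sum]
          exact Finset.sum_congr rfl fun f _ => by ring }
      (fun e he => x.2 e he)) : _ →ₗ[ZMod N] ZMod N).toAddMonoidHom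
  have hA : ∀ (x : annihilator N F K) (e : F → ZMod N),
      A x (Submodule.Quotient.mk e) = ∑ f : F, x.1 f * e f := fun _ _ => rfl
  let B : (((F → ZMod N) ⧸ K) →+ ZMod N) → (annihilator N F K) := fun ψ =>
    ⟨fun f => ψ (Submodule.Quotient.mk (Pi.single f 1)), mem_ann ψ⟩
  have hl : ∀ x, B (A x) = x := by
    intro x
    refine Subtype.ext (funext fun g => ?_)
    show A x (Submodule.Quotient.mk (Pi.single g 1)) = x.1 g
    rw [hA, Finset.sum_eq_single g]
    · simp
    · intro f _ hf; simp [Pi.single_apply, hf]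
    · intro h; exact absurd (Finset.mem_univ g) h
  have hr : ∀ ψ, A (B ψ) = ψ := by
    intro ψ
    ext q
    obtain ⟨e, rfl⟩ := Submodule.Quotient.mk_surjective K q
    rw [hA]
    exact key ψ e
  have hadd : ∀ x y, A (x + y) = A x + A y := by
    intro x y
    ext q
    obtain ⟨e, rfl⟩ := Submodule.Quotient.mk_surjective K q
    rw [AddMonoidHom.add_apply, hA, hA, hA]
    simp only [Submodule.coe_add, Pi.add_apply, add_mul]
    rw [Finset.sum_add_distrib]
  exact ⟨AddEquiv.mk' ⟨A, B, hl, hr⟩ hadd⟩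

/-- The annihilator of a submodule `K ≤ (ℤ/Nℤ)^F` is isomorphic, as a
`ℤ/Nℤ`-module, to the quotient `(ℤ/Nℤ)^F / K`. -/
theorem annihilator_iso_quotient (N : ℕ) (hN : 0 < N) (F : Type*) [Fintype F]
    (K : Submodule (ZMod N) (F → ZMod N)) :
    Nonempty ((annihilator N F K) ≃ₗ[ZMod N] ((F → ZMod N) ⧸ K)) := by
  haveI : NeZero N := ⟨hN.ne'⟩
  haveI : Finite ((F → ZMod N) ⧸ K) :=
    Finite.of_surjective _ (Submodule.Quotient.mk_surjective K)
  obtain ⟨e₁⟩ := ann_equiv_dual N F K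
  obtain ⟨e₂⟩ := dual_equiv N ((F → ZMod N) ⧸ K)
  exact ⟨(e₁.trans e₂).toLinearEquiv (fun c x => ZMod.map_smul (e₁.trans e₂).toAddMonoidHom c x)⟩
end

section
/- Let q be a prime power, let E = F_{q^k} for some k ≥ 1, and let a, b, c ∈ E satisfy a·b ≠ c and a^q ≠ b. Set B = (b − a^q)^{q+1} / (c − a·b)^q ∈ E^×. Then the polynomial X^{q+1} + a·X^q + b·X + c ∈ E[X] splits completely over E if and only if the polynomial X^{q+1} + B·X + B splits completely over E. -/
open Polynomial

/-- The substitution `X = ((c - ab)/(b - a^q))·X̄ - a` transforms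
`X^{q+1} + aX^q + bX + c` into (a scalar multiple of) `X̄^{q+1} + B·X̄ + B` with
`B = (b - a^q)^{q+1}/(c - ab)^q`; consequently the former splits completely
over `E = F_{q^k}` iff the latter does. -/
theorem splits_iff_FB_splits (q : ℕ) (hq : IsPrimePow q) (k : ℕ) (hk : 1 ≤ k)
    (E : Type*) [Field E] [Fintype E] (hE : Fintype.card E = q ^ k)
    (a b c : E) (hab : a * b ≠ c) (haq : a ^ q ≠ b) :
    ∀ B : E, B = (b - a ^ q) ^ (q + 1) / (c - a * b) ^ q →
      ((X ^ (q + 1) + C a * X ^ q + C b * X + C c : Polynomial E).Splits ↔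
        (X ^ (q + 1) + C B * X + C B : Polynomial E).Splits) := by
  intro B hB
  obtain ⟨p, n, hp, hn, rfl⟩ := hq
  have hp' : p.Prime := hp.nat_prime
  haveI : Fact p.Prime := ⟨hp'⟩
  set q := p ^ n with hqdef
  -- characteristic of E is p
  haveI : CharP E p := by
    obtain ⟨m, hrp, hcm⟩ := FiniteField.card E (ringChar E)
    have hdvd : ringChar E ∣ p := by
      have : ringChar E ∣ p ^ (n * k) := by
        rw [pow_mul, ← hE, hcm]
        exact dvd_pow_self _ (by positivity)
      exact hrp.dvd_of_dvd_pow this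
    have : ringChar E = p := (Nat.prime_dvd_prime_iff_eq hrp hp').mp hdvd
    rw [← this]; infer_instance
  have hc0 : c - a * b ≠ 0 := sub_ne_zero.mpr fun h => hab h.symm
  have hb0 : b - a ^ q ≠ 0 := sub_ne_zero.mpr fun h => haq h.symm
  set d : E := (c - a * b) / (b - a ^ q) with hd
  have hd0 : d ≠ 0 := div_ne_zero hc0 hb0
  have hB0 : B ≠ 0 := hB ▸ div_ne_zero (pow_ne_zero _ hb0) (pow_ne_zero _ hc0)
  have h1 : d * (b - a ^ q) = c - a * b := div_mul_cancel₀ _ hb0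
  have h2 : d ^ (q + 1) * B = c - a * b := by
    rw [hB, hd, div_pow]
    field_simp
    ring
  have hc1 := congrArg C h1
  have hc2 := congrArg C h2
  simp only [map_mul, map_sub, map_pow] at hc1 hc2
  have key : (X ^ (q + 1) + C a * X ^ q + C b * X + C c : E[X]).comp (C d * X - C a)
      = C (d ^ (q + 1)) * (X ^ (q + 1) + C B * X + C B) := by
    have hl : (C d * X - C a : E[X]) ^ q = C d ^ q * X ^ q - C a ^ q := by
      rw [hqdef, sub_pow_char_pow, mul_pow]
    simp only [add_comp, mul_comp, pow_comp, X_comp, C_comp]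
    rw [pow_succ, hl, map_pow]
    linear_combination (X : E[X]) * hc1 - X * hc2 - hc2
  have hg0 : (X ^ (q + 1) + C B * X + C B : E[X]) ≠ 0 := fun h => hB0 (by
    have := congrArg (fun P : E[X] => P.coeff 0) h
    simpa [coeff_X_pow] using this)
  have hdeg : ((C d * X - C a : E[X]).map (RingHom.id E)).degree = 1 := by
    rw [map_id, sub_eq_add_neg, ← map_neg C a]
    exact degree_linear hd0
  rw [splits_iff_comp_splits_of_degree_eq_one (g := C d * X - C a) (by simpa using hdeg), key,
    splits_mul (fun h => hd0 (by simpa [pow_eq_zero_iff] using h)) hg0]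
  rw [and_iff_right (Splits.C _)]
end

section
/- Let q be a prime power, let E = F_{q^k} for some k ≥ 1, let a, b ∈ E with a^q ≠ b, and let B ∈ E^×. Then there exists a unique c ∈ E such that c ≠ a·b and (b − a^q)^{q+1} = B·(c − a·b)^q; moreover, if the polynomial X^{q+1} + B·X + B splits completely over E, then for this c the polynomial X^{q+1} + a·X^q + b·X + c splits completely over E. -/
open Polynomial

lemma pow_q_bijective (q : ℕ) (hq : IsPrimePow q) (k : ℕ) (hk : 1 ≤ k)
    (E : Type*) [Field E] [Fintype E] (hE : Fintype.card E = q ^ k) :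
    Function.Bijective (fun x : E => x ^ q) := by
  obtain ⟨p, n, hp, hn, hpq⟩ := hq
  subst hpq
  have hp' : p.Prime := hp.nat_prime
  have hcr : CharP E (ringChar E) := ringChar.charP E
  obtain ⟨m, hrp, hcard⟩ := FiniteField.card E (ringChar E)
  have hpr : p = ringChar E := by
    have hdvd : p ∣ (ringChar E) ^ (m : ℕ) := by
      rw [← hcard, hE]
      exact dvd_pow (dvd_pow_self p hn.ne') (Nat.one_le_iff_ne_zero.mp hk)
    exact (Nat.prime_dvd_prime_iff_eq hp' hrp).mp (hp'.dvd_of_dvd_pow hdvd)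
  have hcp : CharP E p := hpr ▸ hcr
  have hfact : Fact p.Prime := ⟨hp'⟩
  have hinj : Function.Injective (fun x : E => x ^ p ^ n) := by
    intro x y h
    have h0 : (x - y) ^ p ^ n = 0 := by
      rw [sub_pow_char_pow]; simpa [sub_eq_zero] using h
    exact sub_eq_zero.mp ((pow_eq_zero_iff (pow_pos hp'.pos n).ne').mp h0)
  exact Finite.injective_iff_bijective.mp hinj

/-- For each admissible pair `(a, b)` with `a^q ≠ b` and each `B ∈ E^×` there is
a unique `c ≠ ab` with `(b - a^q)^{q+1} = B·(c - ab)^q`; moreover if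
`X^{q+1} + B·X + B` splits completely over `E`, then for this `c` the polynomial
`X^{q+1} + a·X^q + b·X + c` splits completely over `E`. -/
theorem unique_c_and_splits (q : ℕ) (hq : IsPrimePow q) (k : ℕ) (hk : 1 ≤ k)
    (E : Type*) [Field E] [Fintype E] (hE : Fintype.card E = q ^ k)
    (a b : E) (haq : a ^ q ≠ b) (B : E) (hB : B ≠ 0) :
    (∃! c : E, c ≠ a * b ∧ (b - a ^ q) ^ (q + 1) = B * (c - a * b) ^ q) ∧
      ((X ^ (q + 1) + C B * X + C B : Polynomial E).Splits →
        ∀ c : E, c ≠ a * b → (b - a ^ q) ^ (q + 1) = B * (c - a * b) ^ q →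
          (X ^ (q + 1) + C a * X ^ q + C b * X + C c : Polynomial E).Splits) := by
  have hbij := pow_q_bijective q hq k hk E hE
  have ht : b - a ^ q ≠ 0 := sub_ne_zero.mpr (Ne.symm haq)
  constructor
  · obtain ⟨y, hy⟩ := hbij.surjective ((b - a ^ q) ^ (q + 1) / B)
    simp only at hy
    have hy0 : y ≠ 0 := by
      intro h
      apply pow_ne_zero (q + 1) ht
      rw [h, zero_pow hq.pos.ne'] at hy
      exact ((div_eq_zero_iff.mp hy.symm).resolve_right hB)
    refine ⟨a * b + y, ⟨by simpa using hy0, by rw [add_sub_cancel_left, hy]; field_simp⟩, ?_⟩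
    rintro c ⟨hc, hc2⟩
    have hpow : (c - a * b) ^ q = y ^ q := by
      rw [hy, eq_div_iff hB]; linear_combination -hc2
    have := hbij.injective hpow
    linear_combination this
  · intro hsplit c hc hrel
    set t := b - a ^ q with hts
    set y := c - a * b with hys
    have hy0 : y ≠ 0 := sub_ne_zero.mpr hc
    set u := y / t with hus
    set v := t / y with hvs
    have hu0 : u ≠ 0 := div_ne_zero hy0 ht
    have hv0 : v ≠ 0 := div_ne_zero ht hy0
    have huv : u * v = 1 := by rw [hus, hvs, div_mul_div_comm, mul_comm y t, div_self (mul_ne_zero ht hy0)]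
    have h2 : B * u ^ (q + 1) = y := by
      rw [hus, div_pow, hrel, pow_succ]
      field_simp
    have h1 : B * u ^ (q + 1) * v = t := by
      rw [h2, hvs]; field_simp
    obtain ⟨p, n, hp, hn, hpq⟩ := hq
    have hp' : p.Prime := hp.nat_prime
    have hcp : CharP E p := by
      have hcr : CharP E (ringChar E) := ringChar.charP E
      obtain ⟨m, hrp, hcard⟩ := FiniteField.card E (ringChar E)
      have hpr : p = ringChar E := by
        have hdvd : p ∣ (ringChar E) ^ (m : ℕ) := by
          rw [← hcard, hE, ← hpq]
          exact dvd_pow (dvd_pow_self p hn.ne') (Nat.one_le_iff_ne_zero.mp hk)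
        exact (Nat.prime_dvd_prime_iff_eq hp' hrp).mp (hp'.dvd_of_dvd_pow hdvd)
      exact hpr ▸ hcr
    have hfact : Fact p.Prime := ⟨hp'⟩
    have hfrob : ∀ x z : Polynomial E, (x + z) ^ q = x ^ q + z ^ q := by
      intro x z; rw [← hpq]; exact add_pow_char_pow x z p n
    have key : (X ^ (q + 1) + C a * X ^ q + C b * X + C c : Polynomial E) =
        C (u ^ (q + 1)) * ((X ^ (q + 1) + C B * X + C B).comp (C v * X + C (v * a))) := by
      have hA : (C a : Polynomial E) ^ q = C (a ^ q) := by rw [← C_pow]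
      have expand : ((X : Polynomial E) + C a) ^ (q + 1)
          = (X ^ q + C (a ^ q)) * (X + C a) := by
        rw [pow_succ, hfrob, hA]
      have hcomp : (X ^ (q + 1) + C B * X + C B : Polynomial E).comp (C v * X + C (v * a))
          = C (v ^ (q + 1)) * ((X ^ q + C (a ^ q)) * (X + C a)) + C B * (C v * (X + C a)) + C B := by
        simp only [add_comp, mul_comp, pow_comp, X_comp, C_comp]
        have hL : (C v * X + C (v * a) : Polynomial E) = C v * (X + C a) := by
          rw [C_mul]; ring
        rw [hL, mul_pow, expand, ← C_pow]
      rw [hcomp]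
      have e1 : C (u ^ (q + 1)) * C (v ^ (q + 1)) = (1 : Polynomial E) := by
        rw [← C_mul, ← mul_pow, huv, one_pow, C_1]
      have e2 : C (u ^ (q + 1)) * (C B * C v) = C t := by
        rw [← C_mul, ← C_mul, ← h1]; ring_nf
      have e3 : C (u ^ (q + 1)) * C B = C y := by
        rw [← C_mul, ← h2]; ring_nf
      calc (X ^ (q + 1) + C a * X ^ q + C b * X + C c : Polynomial E)
          = (X ^ q + C (a ^ q)) * (X + C a) + C t * (X + C a) + C y := by
            rw [hts, hys, pow_succ]
            simp only [C_sub, C_mul]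
            ring
        _ = _ := by
            linear_combination (-((X ^ q + C (a ^ q)) * (X + C a))) * e1 - (X + C a) * e2 - e3
    rw [key]
    refine Splits.mul (Splits.C _) ?_
    exact hsplit.comp_of_degree_le_one degree_linear_le
end

section
/- Let q be a prime power and let E = F_{q^2} be the quadratic extension of F_q. For every a ∈ E and every c ∈ F_q with c ≠ a^{q+1}, the polynomial X^{q+1} + a·X^q + a^q·X + c ∈ E[X] splits completely over E and has q+1 distinct roots in E. -/
open Polynomial

/-- For `E = F_{q²}`, `a ∈ E` and `c` in the subfield `F_q` (i.e. `c^q = c`)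
with `c ≠ a^{q+1}`, the polynomial `X^{q+1} + a·X^q + a^q·X + c` splits
completely over `E` and has `q + 1` distinct roots in `E`. -/
theorem k_eq_two_splitting (q : ℕ) (hq : IsPrimePow q)
    (E : Type*) [Field E] [Fintype E] [DecidableEq E] (hE : Fintype.card E = q ^ 2)
    (a : E) (c : E) (hc : c ^ q = c) (hne : c ≠ a ^ (q + 1)) :
    (X ^ (q + 1) + C a * X ^ q + C (a ^ q) * X + C c : Polynomial E).Splits ∧
      ((X ^ (q + 1) + C a * X ^ q + C (a ^ q) * X + C c : Polynomial E).roots).toFinset.card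
        = q + 1 := by
  classical
  obtain ⟨p, k, hp, hk, rfl⟩ := hq
  have hp' : p.Prime := hp.nat_prime
  have := Fact.mk hp'
  set q := p ^ k with hqdef
  have hq2 : 2 ≤ q := by
    calc 2 = 2 ^ 1 := rfl
    _ ≤ p ^ 1 := Nat.pow_le_pow_left hp'.two_le 1
    _ ≤ p ^ k := Nat.pow_le_pow_right hp'.pos hk
  -- characteristic of E is p
  have hrfact : Fact (ringChar E).Prime := Fact.mk (CharP.char_is_prime E (ringChar E))
  obtain ⟨n, hn⟩ := FiniteField.card E (ringChar E)
  have hrp : ringChar E = p := by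
    have hdvd : ringChar E ∣ p ^ (k * 2) := by
      rw [pow_mul, ← hqdef, ← hE, hn.2]
      exact dvd_pow_self _ (by positivity)
    exact ((Nat.prime_dvd_prime_iff_eq hrfact.out hp').mp
      (hrfact.out.dvd_of_dvd_pow hdvd))
  haveI hcharp : CharP E p := hrp ▸ ringChar.charP E
  -- Frobenius x ↦ x^q
  have hfrobP : ∀ f g : Polynomial E, (f + g) ^ q = f ^ q + g ^ q := fun f g => by
    rw [hqdef]; exact add_pow_char_pow f g p k
  have hfrobsub : ∀ x y : E, (x - y) ^ q = x ^ q - y ^ q := fun x y => by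
    rw [hqdef]; exact sub_pow_char_pow x y k (p := p)
  -- the nonzero constant d ∈ F_q
  set d : E := a ^ (q + 1) - c with hd
  have hd0 : d ≠ 0 := sub_ne_zero.mpr (Ne.symm hne)
  have haq : a ^ (q ^ 2) = a := by rw [← hE]; exact FiniteField.pow_card a
  have hdq : d ^ q = d := by
    rw [hd, hfrobsub, hc, ← pow_mul,
      show (q + 1) * q = q ^ 2 + q by ring, pow_add, haq, ← pow_succ']
  -- polynomial identity  P = (X + C a)^(q+1) - C d
  set P : Polynomial E := X ^ (q + 1) + C a * X ^ q + C (a ^ q) * X + C c with hP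
  have hkey : P = (X + C a) ^ (q + 1) - C d := by
    rw [hP, hd, pow_succ (X + C a), hfrobP, map_sub, map_pow, map_pow]
    ring
  have heval : ∀ x : E, P.eval x = (x + a) ^ (q + 1) - d := by
    intro x; rw [hkey]; simp
  have hdeg : P.natDegree = q + 1 := by
    rw [hkey, natDegree_sub_C, natDegree_pow, natDegree_X_add_C, mul_one]
  have hP0 : P ≠ 0 := fun h => by simp [h] at hdeg
  -- units group
  obtain ⟨g, hg⟩ := IsCyclic.exists_generator (α := Eˣ)
  have hog : orderOf g = q ^ 2 - 1 := by
    rw [orderOf_eq_card_of_forall_mem_zpowers hg, Nat.card_eq_fintype_card,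
      Fintype.card_units, hE]
  have hq21 : (q ^ 2 - 1 : ℕ) = (q + 1) * (q - 1) := by
    simpa using Nat.sq_sub_sq q 1
  -- existence of y₀ with y₀^(q+1) = d
  obtain ⟨y0, hy0⟩ : ∃ y : E, y ^ (q + 1) = d := by
    set du : Eˣ := Units.mk0 d hd0 with hdu
    obtain ⟨m, hm'⟩ := hg du
    have hm : g ^ m = du := hm'
    have hdu1 : du ^ (q - 1 : ℕ) = 1 := by
      have : d ^ (q - 1) * d = d := by
        rw [← pow_succ]
        have : q - 1 + 1 = q := by omega
        rw [this, hdq]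
      ext
      push_cast [hdu]
      field_simp at this ⊢
      exact this
    have hdvd : ((q ^ 2 - 1 : ℕ) : ℤ) ∣ m * (q - 1 : ℕ) := by
      rw [← hog]
      rw [orderOf_dvd_iff_zpow_eq_one]
      rw [zpow_mul, hm, zpow_natCast, hdu1]
    rw [hq21] at hdvd
    push_cast at hdvd
    have hq1 : ((q : ℤ) - 1) ≠ 0 := by
      have : (2 : ℤ) ≤ q := by exact_mod_cast hq2
      omega
    have hq1' : ((q - 1 : ℕ) : ℤ) = (q : ℤ) - 1 := by
      push_cast [Nat.cast_sub (by omega : 1 ≤ q)]; ring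
    rw [hq1'] at hdvd
    have hdm : ((q : ℤ) + 1) ∣ m := by
      have := (mul_dvd_mul_iff_right hq1).mp hdvd
      exact_mod_cast this
    obtain ⟨t, ht⟩ := hdm
    refine ⟨((g ^ t : Eˣ) : E), ?_⟩
    have : (g ^ t) ^ ((q : ℤ) + 1) = du := by
      rw [← zpow_mul]
      rw [show t * ((q : ℤ) + 1) = ((q : ℤ) + 1) * t by ring, ← ht, hm]
    calc ((g ^ t : Eˣ) : E) ^ (q + 1) = (((g ^ t) ^ (q + 1) : Eˣ) : E) := by push_cast; ring
    _ = d := by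
      rw [show ((q : ℤ) + 1) = ((q + 1 : ℕ) : ℤ) by push_cast; ring, zpow_natCast] at this
      rw [this]; rfl
  -- primitive (q+1)-th root of unity
  have hζ : ∃ ζ : E, IsPrimitiveRoot ζ (q + 1) := by
    refine ⟨((g ^ (q - 1) : Eˣ) : E), ?_⟩
    rw [IsPrimitiveRoot.coe_units_iff]
    have hord : orderOf (g ^ (q - 1)) = q + 1 := by
      have hq1pos : 0 < q - 1 := by omega
      rw [orderOf_pow, hog, hq21, Nat.gcd_eq_right ⟨q + 1, by ring⟩]
      exact Nat.mul_div_cancel _ hq1pos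
    exact hord ▸ IsPrimitiveRoot.orderOf _
  obtain ⟨ζ, hζ⟩ := hζ
  -- count the roots
  have hcardnth : Multiset.card (nthRoots (q + 1) d) = q + 1 := by
    rw [hζ.card_nthRoots, if_pos ⟨y0, hy0⟩]
  have hnodup : (nthRoots (q + 1) d).Nodup := hζ.nthRoots_nodup hd0
  set S : Finset E := (nthRoots (q + 1) d).toFinset with hS
  have hScard : S.card = q + 1 := by
    rw [hS, Multiset.toFinset_card_of_nodup hnodup, hcardnth]
  set T : Finset E := S.image (fun y => y - a) with hT
  have hTcard : T.card = q + 1 := by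
    rw [hT, Finset.card_image_of_injective _ (sub_left_injective), hScard]
  have hTsub : T ⊆ P.roots.toFinset := by
    intro x hx
    rw [hT, Finset.mem_image] at hx
    obtain ⟨y, hy, rfl⟩ := hx
    rw [hS, Multiset.mem_toFinset, mem_nthRoots (by omega : 0 < q + 1)] at hy
    rw [Multiset.mem_toFinset, mem_roots hP0, IsRoot.def, heval, sub_add_cancel, hy, sub_self]
  have h1 : q + 1 ≤ P.roots.toFinset.card := hTcard ▸ Finset.card_le_card hTsub
  have h2 : P.roots.toFinset.card ≤ Multiset.card P.roots := Multiset.toFinset_card_le _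
  have h3 : Multiset.card P.roots ≤ q + 1 := hdeg ▸ P.card_roots'
  constructor
  · rw [splits_iff_card_roots, hdeg]; omega
  · omega
end

section
/- Let q be a prime power, let m ≥ 1, and let E = F_{q^m}. Then the set of B ∈ E^× for which the polynomial X^{q+1} + B·X + B splits completely over E equals the image of { z ∈ E : z^{q^2} ≠ z } under the map z ↦ (z − z^{q^2})^{q+1} / (z − z^q)^{q^2+1}. -/
open Polynomial

private lemma cardF (q m : ℕ) (h2 : 2 ≤ q) (hm : 1 ≤ m) (E : Type*) [Field E] [Fintype E]
    [DecidableEq E] (hE : Fintype.card E = q ^ m) :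
    (Finset.univ.filter fun c : E => c ^ q = c).card = q := by
  have hq1m : 1 < q ^ m := by
    calc 1 < q := h2
    _ ≤ q ^ m := Nat.le_self_pow (by omega) q
  have hbigne : (X ^ (q ^ m) - X : E[X]) ≠ 0 := by
    rw [← hE]; exact FiniteField.X_pow_card_sub_X_ne_zero E (hE ▸ hq1m)
  have hgne : (X ^ q - X : E[X]) ≠ 0 := FiniteField.X_pow_card_sub_X_ne_zero E h2
  have hbigroots : (X ^ (q ^ m) - X : E[X]).roots = Finset.univ.val := by
    rw [← hE]; exact FiniteField.roots_X_pow_card_sub_X E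
  have hdvd : (X ^ q - X : E[X]) ∣ X ^ (q ^ m) - X := by
    obtain ⟨s, hs⟩ : q - 1 ∣ q ^ m - 1 := by
      simpa using Nat.sub_dvd_pow_sub_pow q 1 m
    have h1 : (X ^ (q - 1) - 1 : E[X]) ∣ X ^ (q ^ m - 1) - 1 := by
      have := sub_dvd_pow_sub_pow (X ^ (q - 1) : E[X]) 1 s
      rwa [one_pow, ← pow_mul, ← hs] at this
    have e1 : (X ^ q - X : E[X]) = X * (X ^ (q - 1) - 1) := by
      rw [mul_sub, mul_one, ← pow_succ', Nat.sub_add_cancel (by omega)]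
    have e2 : (X ^ (q ^ m) - X : E[X]) = X * (X ^ (q ^ m - 1) - 1) := by
      rw [mul_sub, mul_one, ← pow_succ', Nat.sub_add_cancel (by omega)]
    rw [e1, e2]; exact mul_dvd_mul_left X h1
  have hbigsplits : (X ^ (q ^ m) - X : E[X]).Splits := by
    rw [splits_iff_card_roots, hbigroots, FiniteField.X_pow_card_sub_X_natDegree_eq E hq1m,
      ← Finset.card_def, Finset.card_univ, hE]
  have hgsplits : (X ^ q - X : E[X]).Splits :=
    Splits.of_dvd hbigsplits hbigne hdvd
  have hgcard : Multiset.card (X ^ q - X : E[X]).roots = q := by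
    rw [splits_iff_card_roots.mp hgsplits, FiniteField.X_pow_card_sub_X_natDegree_eq E h2]
  have hnodup : (X ^ q - X : E[X]).roots.Nodup :=
    Multiset.nodup_of_le (roots.le_of_dvd hbigne hdvd) (hbigroots ▸ Finset.univ.nodup)
  have hset : (Finset.univ.filter fun c : E => c ^ q = c) = (X ^ q - X : E[X]).roots.toFinset := by
    ext c
    simp only [Finset.mem_filter, Finset.mem_univ, true_and, Multiset.mem_toFinset,
      mem_roots hgne, IsRoot.def, eval_sub, eval_pow, eval_X, sub_eq_zero]
  rw [hset, Multiset.toFinset_card_of_nodup hnodup, hgcard]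

private lemma frobFacts (q m : ℕ) (hq : IsPrimePow q) (hm : 1 ≤ m) (E : Type*) [Field E]
    [Fintype E] (hE : Fintype.card E = q ^ m) :
    (∀ x y : E, (x + y) ^ q = x ^ q + y ^ q) ∧
    (∀ x y : E, (x - y) ^ q = x ^ q - y ^ q) ∧ ((q : E) = 0) := by
  obtain ⟨p, k, hp, hk, rfl⟩ := hq
  haveI : Fact p.Prime := ⟨hp.nat_prime⟩
  obtain ⟨n, hrp, hEn⟩ := FiniteField.card E (ringChar E)
  have hdvd : p ∣ ringChar E ^ (n : ℕ) := by
    rw [← hEn, hE, ← pow_mul]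
    exact dvd_pow_self p (by positivity)
  have hpr : p = ringChar E :=
    (Nat.prime_dvd_prime_iff_eq hp.nat_prime hrp).mp (hp.nat_prime.dvd_of_dvd_pow hdvd)
  haveI : CharP E p := hpr ▸ ringChar.charP E
  refine ⟨fun x y => add_pow_char_pow x y p k, fun x y => sub_pow_char_pow x y k,
    by rw [Nat.cast_pow, CharP.cast_eq_zero E p, zero_pow (by omega)]⟩

/-- Characterisation of the splitting values (after Helleseth–Kholosha): over
`E = F_{q^m}`, the set of `B ∈ E^×` for which `X^{q+1} + B·X + B` splits
completely equals the image of `{z : z^{q²} ≠ z}` under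
`z ↦ (z - z^{q²})^{q+1} / (z - z^q)^{q²+1}`. -/
theorem splitting_values_characterisation (q : ℕ) (hq : IsPrimePow q)
    (m : ℕ) (hm : 1 ≤ m)
    (E : Type*) [Field E] [Fintype E] (hE : Fintype.card E = q ^ m) :
    {B : E | B ≠ 0 ∧ ((X ^ (q + 1) + C B * X + C B : Polynomial E).map (RingHom.id E)).Splits} =
      (fun z : E => (z - z ^ (q ^ 2)) ^ (q + 1) / (z - z ^ q) ^ (q ^ 2 + 1)) ''
        {z : E | z ^ (q ^ 2) ≠ z} := by
  classical
  obtain ⟨hadd, hsub, hcast⟩ := frobFacts q m hq hm E hE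
  have hq2 : 2 ≤ q := hq.two_le
  have hq0 : q ≠ 0 := by omega
  have hneg : ∀ v : E, (-v) ^ q = -v ^ q := by
    intro v; simpa [zero_pow hq0] using hsub 0 v
  have hinj : ∀ x y : E, x ^ q = y ^ q → x = y := by
    intro x y h
    have h2 := hsub x y
    rw [h, sub_self] at h2
    exact sub_eq_zero.mp (pow_eq_zero_iff hq0 |>.mp h2)
  have hqq : q ^ 2 = q * q := sq q
  -- degree facts for a generic B
  have hdeg : ∀ B : E, B ≠ 0 →
      (X ^ (q + 1) + C B * X + C B : E[X]).natDegree = q + 1 ∧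
      (X ^ (q + 1) + C B * X + C B : E[X]) ≠ 0 := by
    intro B hB
    have h1 : degree (C B * X + C B : E[X]) < ((q + 1 : ℕ) : WithBot ℕ) :=
      lt_of_le_of_lt degree_linear_le (by exact_mod_cast by omega)
    have hdegf : (X ^ (q + 1) + C B * X + C B : E[X]).degree = ((q + 1 : ℕ) : WithBot ℕ) := by
      rw [add_assoc]
      rw [degree_add_eq_left_of_degree_lt (by rwa [degree_X_pow]), degree_X_pow]
    constructor
    · exact natDegree_eq_of_degree_eq_some hdegf
    · intro h
      rw [h, degree_zero] at hdegf
      exact (by simp : ((q + 1 : ℕ) : WithBot ℕ) ≠ ⊥) hdegf.symm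
  -- forward direction
  have forward : ∀ z : E, z ^ (q ^ 2) ≠ z →
      (z - z ^ (q ^ 2)) ^ (q + 1) / (z - z ^ q) ^ (q ^ 2 + 1) ≠ 0 ∧
      (X ^ (q + 1) + C ((z - z ^ (q ^ 2)) ^ (q + 1) / (z - z ^ q) ^ (q ^ 2 + 1)) * X
        + C ((z - z ^ (q ^ 2)) ^ (q + 1) / (z - z ^ q) ^ (q ^ 2 + 1)) : E[X]).Splits := by
    intro z hz
    have hz3q : z ^ (q ^ 2) = (z ^ q) ^ q := by rw [hqq, pow_mul]
    have hzz2 : z ≠ z ^ q := by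
      intro h; apply hz; rw [hz3q, ← h, ← h]
    have hz23 : z ^ q ≠ z ^ (q ^ 2) := by
      rw [hz3q]; intro h; exact hzz2 (hinj _ _ h)
    have hz13 : z ≠ z ^ (q ^ 2) := fun h => hz h.symm
    have hd2 : z - z ^ (q ^ 2) ≠ 0 := sub_ne_zero.mpr hz13
    have hd1 : z - z ^ q ≠ 0 := sub_ne_zero.mpr hzz2
    have hd32 : z ^ (q ^ 2) - z ^ q ≠ 0 := sub_ne_zero.mpr (Ne.symm hz23)
    have hBne : (z - z ^ (q ^ 2)) ^ (q + 1) / (z - z ^ q) ^ (q ^ 2 + 1) ≠ 0 :=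
      div_ne_zero (pow_ne_zero _ hd2) (pow_ne_zero _ hd1)
    refine ⟨hBne, ?_⟩
    set B : E := (z - z ^ (q ^ 2)) ^ (q + 1) / (z - z ^ q) ^ (q ^ 2 + 1) with hBdef
    set A : E := (z - z ^ (q ^ 2)) ^ q with hAdef
    set G : E := (z ^ (q ^ 2) - z ^ q) ^ q with hGdef
    have hA0 : A ≠ 0 := pow_ne_zero _ hd2
    have hG0 : G ≠ 0 := pow_ne_zero _ hd32
    have hzmq : (z - z ^ q) ^ q = z ^ q - z ^ (q ^ 2) := by rw [hsub, hz3q]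
    have hBval : B = -(A * (z - z ^ (q ^ 2))) / (G * (z - z ^ q)) := by
      rw [hBdef]
      have hden : (z - z ^ q) ^ (q ^ 2 + 1) = -(G * (z - z ^ q)) := by
        have h1 : (z - z ^ q) ^ (q ^ 2 + 1) = ((z - z ^ q) ^ q) ^ q * (z - z ^ q) := by ring
        rw [h1, hzmq, show z ^ q - z ^ (q ^ 2) = -(z ^ (q ^ 2) - z ^ q) by ring, hneg, hGdef]
        ring
      have hnum : (z - z ^ (q ^ 2)) ^ (q + 1) = A * (z - z ^ (q ^ 2)) := by
        rw [hAdef]; ring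
      rw [hnum, hden, div_neg, neg_div]
    -- the roots
    have hzplus : ∀ c : E, c ^ q = c → z + c ≠ 0 := by
      intro c hc h
      apply hzz2
      have hzc : z = -c := eq_neg_of_add_eq_zero_left h
      rw [hzc, hneg, hc]
    have hz2plus : ∀ c : E, c ^ q = c → z ^ q + c ≠ 0 := by
      intro c hc h
      apply hz23
      have hzc : z ^ q = -c := eq_neg_of_add_eq_zero_left h
      rw [hz3q, hzc, hneg, hc]
    have hane : (z - z ^ (q ^ 2)) / (z ^ (q ^ 2) - z ^ q) ≠ 0 := div_ne_zero hd2 hd32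
    have haq : ((z - z ^ (q ^ 2)) / (z ^ (q ^ 2) - z ^ q)) ^ q = A / G := by
      rw [div_pow]
    -- a = x_∞ is a root
    have hroota : (X ^ (q + 1) + C B * X + C B : E[X]).IsRoot
        ((z - z ^ (q ^ 2)) / (z ^ (q ^ 2) - z ^ q)) := by
      simp only [IsRoot.def, eval_add, eval_mul, eval_pow, eval_X, eval_C]
      rw [pow_succ, haq, hBval]
      field_simp
      ring
    -- x_c is a root for c in F
    have hrootc : ∀ c : E, c ^ q = c → (X ^ (q + 1) + C B * X + C B : E[X]).IsRoot
        ((z - z ^ (q ^ 2)) / (z ^ (q ^ 2) - z ^ q) * ((z ^ q + c) / (z + c))) := by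
      intro c hc
      have hxq : ((z - z ^ (q ^ 2)) / (z ^ (q ^ 2) - z ^ q) * ((z ^ q + c) / (z + c))) ^ q
          = A / G * ((z ^ (q ^ 2) + c) / (z ^ q + c)) := by
        rw [mul_pow, div_pow, div_pow, hadd (z ^ q) c, hadd z c, hc, ← hz3q]
      simp only [IsRoot.def, eval_add, eval_mul, eval_pow, eval_X, eval_C]
      rw [pow_succ, hxq, hBval]
      field_simp [hzplus c hc, hz2plus c hc]
      ring
    -- the root set
    set a : E := (z - z ^ (q ^ 2)) / (z ^ (q ^ 2) - z ^ q) with hadef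
    set R : Finset E := insert a ((Finset.univ.filter fun c : E => c ^ q = c).image
      (fun c => a * ((z ^ q + c) / (z + c)))) with hRdef
    have hnotmem : a ∉ (Finset.univ.filter fun c : E => c ^ q = c).image
        (fun c => a * ((z ^ q + c) / (z + c))) := by
      intro hmem
      obtain ⟨c, hcmem, heq⟩ := Finset.mem_image.mp hmem
      have hc : c ^ q = c := (Finset.mem_filter.mp hcmem).2
      apply hzz2
      have h1 : a * ((z ^ q + c) / (z + c)) = a * 1 := by rw [heq, mul_one]
      have h2 : (z ^ q + c) / (z + c) = 1 := mul_left_cancel₀ hane h1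
      have h3 : z ^ q + c = z + c := by
        rw [div_eq_one_iff_eq (hzplus c hc)] at h2
        exact h2
      have := add_right_cancel h3
      exact this.symm
    have hinjOn : Set.InjOn (fun c => a * ((z ^ q + c) / (z + c)))
        ((Finset.univ.filter fun c : E => c ^ q = c) : Finset E) := by
      intro c hcmem c' hcmem' heq
      have hc : c ^ q = c := (Finset.mem_filter.mp hcmem).2
      have hc' : c' ^ q = c' := (Finset.mem_filter.mp hcmem').2
      simp only at heq
      have h2 : (z ^ q + c) / (z + c) = (z ^ q + c') / (z + c') := mul_left_cancel₀ hane heq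
      rw [div_eq_div_iff (hzplus c hc) (hzplus c' hc')] at h2
      have h3 : (c - c') * (z - z ^ q) = 0 := by linear_combination h2
      rcases mul_eq_zero.mp h3 with h4 | h4
      · exact sub_eq_zero.mp h4
      · exact absurd (sub_eq_zero.mp h4) hzz2
    have hRcard : R.card = q + 1 := by
      rw [hRdef, Finset.card_insert_of_notMem hnotmem, Finset.card_image_of_injOn hinjOn,
        cardF q m hq2 hm E hE]
    have hRroots : ∀ x ∈ R, (X ^ (q + 1) + C B * X + C B : E[X]).IsRoot x := by
      intro x hx
      rw [hRdef, Finset.mem_insert] at hx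
      rcases hx with h | h
      · rw [h]; exact hroota
      · obtain ⟨c, hcmem, heq⟩ := Finset.mem_image.mp h
        rw [← heq]
        exact hrootc c (Finset.mem_filter.mp hcmem).2
    obtain ⟨hnd, hfne⟩ := hdeg B hBne
    have hsubR : R ⊆ (X ^ (q + 1) + C B * X + C B : E[X]).roots.toFinset := by
      intro x hx
      rw [Multiset.mem_toFinset, mem_roots hfne]
      exact hRroots x hx
    have h1 : q + 1 ≤ (X ^ (q + 1) + C B * X + C B : E[X]).roots.toFinset.card := by
      exact le_trans (le_of_eq hRcard.symm) (Finset.card_le_card hsubR)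
    have h2 := Multiset.toFinset_card_le (X ^ (q + 1) + C B * X + C B : E[X]).roots
    have h3 := (X ^ (q + 1) + C B * X + C B : E[X]).card_roots'
    rw [splits_iff_card_roots, hnd]
    omega
  -- converse direction
  have converse : ∀ B : E, B ≠ 0 →
      (X ^ (q + 1) + C B * X + C B : E[X]).Splits →
      ∃ z : E, z ^ (q ^ 2) ≠ z ∧
        (z - z ^ (q ^ 2)) ^ (q + 1) / (z - z ^ q) ^ (q ^ 2 + 1) = B := by
    intro B hB hsplit
    obtain ⟨hnd, hfne⟩ := hdeg B hB
    -- separability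
    have hder : derivative (X ^ (q + 1) + C B * X + C B : E[X]) = X ^ q + C B := by
      simp only [derivative_add, derivative_X_pow, derivative_C, derivative_C_mul,
        derivative_X, mul_one, add_zero]
      rw [Nat.cast_add, Nat.cast_one, hcast, zero_add, Nat.add_sub_cancel, map_one, one_mul]
    have hsep : (X ^ (q + 1) + C B * X + C B : E[X]).Separable := by
      rw [Polynomial.separable_def, hder]
      refine ⟨C B⁻¹, -(C B⁻¹ * X), ?_⟩
      have hCB : (C B⁻¹ * C B : E[X]) = 1 := by
        rw [← C_mul, inv_mul_cancel₀ hB, C_1]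
      linear_combination (X ^ q + 1 - X ^ q : E[X]) * hCB
    have hnodup : (X ^ (q + 1) + C B * X + C B : E[X]).roots.Nodup :=
      Polynomial.nodup_roots hsep
    have hcardroots : ((X ^ (q + 1) + C B * X + C B : E[X]).roots.toFinset).card = q + 1 := by
      rw [Multiset.toFinset_card_of_nodup hnodup, splits_iff_card_roots.mp hsplit, hnd]
    obtain ⟨x1, x2, x3, h1m, h2m, h3m, h12, h13, h23⟩ :=
      Finset.two_lt_card_iff.mp (by omega :
        2 < ((X ^ (q + 1) + C B * X + C B : E[X]).roots.toFinset).card)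
    -- root equations
    have heval : ∀ x : E, x ∈ (X ^ (q + 1) + C B * X + C B : E[X]).roots.toFinset →
        x ^ q * x + B * x + B = 0 := by
      intro x hx
      rw [Multiset.mem_toFinset, mem_roots hfne] at hx
      have := hx
      simp only [IsRoot.def, eval_add, eval_mul, eval_pow, eval_X, eval_C] at this
      rw [pow_succ] at this
      exact this
    have e1 := heval x1 h1m
    have e2 := heval x2 h2m
    have e3 := heval x3 h3m
    have hm1 : ((-1 : E)) ^ q = -1 := by simpa using hneg 1
    have hxne : ∀ x : E, x ^ q * x + B * x + B = 0 → x ≠ 0 := by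
      intro x hx h
      rw [h] at hx
      simp at hx
      exact hB hx
    have hxn1 : ∀ x : E, x ^ q * x + B * x + B = 0 → x + 1 ≠ 0 := by
      intro x hx h
      have hxe : x = -1 := eq_neg_of_add_eq_zero_left h
      rw [hxe, hm1] at hx
      have : (1 : E) = 0 := by linear_combination hx
      exact one_ne_zero this
    have hx1ne := hxne x1 e1
    have hx2ne := hxne x2 e2
    have hx3ne := hxne x3 e3
    have hx1p1 := hxn1 x1 e1
    have hx3p1 := hxn1 x3 e3
    have hx1q : x1 ^ q = (-(B * x1) - B) / x1 := by
      rw [eq_div_iff hx1ne]; linear_combination e1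
    have hx2q : x2 ^ q = (-(B * x2) - B) / x2 := by
      rw [eq_div_iff hx2ne]; linear_combination e2
    have hx3q : x3 ^ q = (-(B * x3) - B) / x3 := by
      rw [eq_div_iff hx3ne]; linear_combination e3
    have hd12 : x1 - x2 ≠ 0 := sub_ne_zero.mpr h12
    have hd23 : x2 - x3 ≠ 0 := sub_ne_zero.mpr h23
    have hd13 : x1 - x3 ≠ 0 := sub_ne_zero.mpr h13
    set z : E := (x1 - x2) / (x2 - x3) with hzdef
    have hz0 : z ≠ 0 := div_ne_zero hd12 hd23
    have hBx1val : ((-(B * x1) - B) : E) = -(B * (x1 + 1)) := by ring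
    have hBx1ne : (-(B * x1) - B : E) ≠ 0 := by
      rw [hBx1val, neg_ne_zero]
      exact mul_ne_zero hB hx1p1
    have hnum12 : x1 ^ q - x2 ^ q = B * (x1 - x2) / (x1 * x2) := by
      rw [hx1q, hx2q]; field_simp; ring
    have hden23 : x2 ^ q - x3 ^ q = B * (x2 - x3) / (x2 * x3) := by
      rw [hx2q, hx3q]; field_simp; ring
    have hzq : z ^ q = z * x3 / x1 := by
      rw [hzdef, div_pow, hsub x1 x2, hsub x2 x3, hnum12, hden23]
      field_simp
    have hzqq : z ^ (q ^ 2) = z * (x3 + 1) / (x1 + 1) := by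
      rw [hqq, pow_mul, hzq, div_pow, mul_pow, hzq, hx1q, hx3q]
      rw [hBx1val, show -(B * x3) - B = -(B * (x3 + 1)) by ring]
      field_simp
    have hzfix : z ^ (q ^ 2) ≠ z := by
      rw [hzqq]
      intro h
      have h2 : z * (x3 + 1) = z * (x1 + 1) := (div_eq_iff hx1p1).mp h
      have h3 := mul_left_cancel₀ hz0 h2
      exact h13 (add_right_cancel h3).symm
    refine ⟨z, hzfix, ?_⟩
    have s1 : z - z ^ q = z * (x1 - x3) / x1 := by
      rw [hzq]; field_simp
    have s2 : z - z ^ (q ^ 2) = z * (x1 - x3) / (x1 + 1) := by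
      rw [hzqq]; field_simp; ring
    have hwq : (z * (x1 - x3)) ^ q = B * (z * (x1 - x3)) / x1 ^ 2 := by
      rw [mul_pow, hsub x1 x3, hzq, hx1q, hx3q]
      field_simp
      ring
    have r1 : x1 ^ q * x1 = -(B * (x1 + 1)) := by linear_combination e1
    have r2 : (x1 ^ q) ^ q * x1 ^ q = -(B ^ q * (x1 ^ q + 1)) := by
      have h := congrArg (fun t : E => t ^ q) r1
      rwa [mul_pow, hneg, mul_pow, hadd x1 1, one_pow] at h
    have r3 : (z * (x1 - x3)) ^ q * x1 ^ 2 = B * (z * (x1 - x3)) := by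
      rw [hwq]; field_simp
    have r4 : ((z * (x1 - x3)) ^ q) ^ q * (x1 ^ q) ^ 2 = B ^ q * (z * (x1 - x3)) ^ q := by
      have h := congrArg (fun t : E => t ^ q) r3
      rwa [mul_pow ((z * (x1 - x3)) ^ q) (x1 ^ 2) q, pow_right_comm x1 2 q,
        mul_pow B (z * (x1 - x3)) q] at h
    have hw0 : z * (x1 - x3) ≠ 0 := mul_ne_zero hz0 hd13
    have hp1 : (x1 + 1) ^ (q + 1) = (x1 ^ q + 1) * (x1 + 1) := by
      rw [pow_succ, hadd x1 1, one_pow]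
    have hpw : (z * (x1 - x3)) ^ (q + 1) = (z * (x1 - x3)) ^ q * (z * (x1 - x3)) :=
      pow_succ _ q
    have hpw2 : (z * (x1 - x3)) ^ (q ^ 2 + 1) = ((z * (x1 - x3)) ^ q) ^ q * (z * (x1 - x3)) := by
      rw [pow_succ, hqq, pow_mul]
    have hpx2 : x1 ^ (q ^ 2 + 1) = (x1 ^ q) ^ q * x1 := by
      rw [pow_succ, hqq, pow_mul]
    have hP1ne : (x1 ^ q + 1) * (x1 + 1) ≠ 0 := by
      have h1 : x1 ^ q + 1 = (x1 + 1) ^ q := by rw [hadd x1 1, one_pow]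
      exact mul_ne_zero (h1 ▸ pow_ne_zero q hx1p1) hx1p1
    have hN2ne : ((z * (x1 - x3)) ^ q) ^ q * (z * (x1 - x3)) ≠ 0 :=
      mul_ne_zero (pow_ne_zero _ (pow_ne_zero _ hw0)) hw0
    have hP2ne : (x1 ^ q) ^ q * x1 ≠ 0 :=
      mul_ne_zero (pow_ne_zero _ (pow_ne_zero _ hx1ne)) hx1ne
    rw [s1, s2, div_pow, div_pow, hp1, hpw, hpw2, hpx2,
      div_div_div_eq, div_eq_iff (mul_ne_zero hP1ne hN2ne)]
    refine mul_left_cancel₀ (pow_ne_zero 2 (pow_ne_zero q hx1ne) : (x1 ^ q) ^ 2 ≠ 0) ?_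
    linear_combination (x1 ^ q * (z * (x1 - x3)) ^ q * (z * (x1 - x3)) * x1) * r2
      - (B * (z * (x1 - x3)) * (x1 ^ q + 1) * (x1 + 1)) * r4
      - (B ^ q * (z * (x1 - x3)) ^ q * (z * (x1 - x3)) * (x1 ^ q + 1)) * e1
  -- conclude
  ext B
  simp only [Set.mem_setOf_eq, Set.mem_image, Polynomial.map_id]
  constructor
  · rintro ⟨hB, hsplit⟩
    obtain ⟨z, hz, hzB⟩ := converse B hB hsplit
    exact ⟨z, hz, hzB⟩
  · rintro ⟨z, hz, hzB⟩
    have h := forward z hz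
    rw [hzB] at h
    exact h
end
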